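/- arXiv:0908.4352 — 4 statements merged into one kernel-verified Lean document; each statement's English description precedes it below -/
import Mathlib

section
/- Let p be a symmetric matrix polynomial in g noncommuting variables with p(0) invertible, and suppose 𝒟_p(n) (the connected component of 0 of {X ∈ 𝕊ₙ(ℝ)^g : p(X) invertible}) is convex for all n. If X ∈ 𝕊ₙ(ℝ)^g, Y ∈ 𝕊ₘ(ℝ)^g, and the direct sum X ⊕ Y lies in 𝒟_p(n+m), then X ∈ 𝒟_p(n) and Y ∈ 𝒟_p(m). -/
open Matrix
open scoped Matrix.Norms.L2Operator

noncomputable section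

/-- A `g`-tuple of `n × n` real matrices. -/
abbrev Tuple (g n : ℕ) := Fin g → Matrix (Fin n) (Fin n) ℝ

/-- Evaluation of a word `w` (of length `k`) in `g` noncommuting letters at the tuple `X`. -/
def wordEval {g n : ℕ} (X : Tuple g n) {k : ℕ} (w : Fin k → Fin g) :
    Matrix (Fin n) (Fin n) ℝ :=
  (List.ofFn fun i => X (w i)).prod

/-- A `δ × δ` matrix noncommutative polynomial in `g` variables of degree at most `d`,
given by its matrix coefficients indexed by words. -/
structure NCPoly (g d δ : ℕ) where
  coeff : ∀ k : ℕ, (Fin k → Fin g) → Matrix (Fin δ) (Fin δ) ℝ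

/-- Evaluation `p(X) = Σ_{|w| ≤ d} p_w ⊗ w(X)`. -/
def NCPoly.eval {g d δ : ℕ} (p : NCPoly g d δ) {n : ℕ} (X : Tuple g n) :
    Matrix (Fin δ × Fin n) (Fin δ × Fin n) ℝ :=
  ∑ k ∈ Finset.range (d + 1), ∑ w : Fin k → Fin g,
    Matrix.kroneckerMap (· * ·) (p.coeff k w) (wordEval X w)

/-- `p(0)`, the constant coefficient of `p`. -/
def NCPoly.constantCoeff {g d δ : ℕ} (p : NCPoly g d δ) : Matrix (Fin δ) (Fin δ) ℝ :=
  p.coeff 0 finZeroElim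

/-- `p` takes symmetric values at tuples of symmetric matrices. -/
def NCPoly.IsSymmPoly {g d δ : ℕ} (p : NCPoly g d δ) : Prop :=
  ∀ (n : ℕ) (X : Tuple g n), (∀ j, (X j).IsSymm) → (p.eval X).IsSymm

/-- The invertibility set `ℑ_p(n)` inside the symmetric tuples. -/
def invSet {g d δ : ℕ} (p : NCPoly g d δ) (n : ℕ) : Set (Tuple g n) :=
  {X | (∀ j, (X j).IsSymm) ∧ IsUnit (p.eval X)}

/-- `𝒟_p(n)`, the connected component of `0` of the invertibility set. -/
def Dset {g d δ : ℕ} (p : NCPoly g d δ) (n : ℕ) : Set (Tuple g n) :=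
  connectedComponentIn (invSet p n) 0

/-- Direct sum of tuples. -/
def dsum {g n m : ℕ} (X : Tuple g n) (Y : Tuple g m) : Tuple g (n + m) :=
  fun j => Matrix.reindex finSumFinEquiv finSumFinEquiv (Matrix.fromBlocks (X j) 0 0 (Y j))

/-!
Convexity puts the whole segment from `0` to `X ⊕ Y` inside `𝒟_p(n+m)`; the endpoint `0` lies there
because a connected component `connectedComponentIn F 0` is nonempty only when `0 ∈ F`.
Up to a permutation of the basis, `p(tX ⊕ tY)` is the block diagonal matrix `p(tX) ⊕ p(tY)`, so every
`p(tX)` with `0 ≤ t ≤ 1` is invertible, and `t ↦ tX` connects `0` to `X` inside the invertibility set.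
-/

theorem wordEval_succ {g n k : ℕ} (X : Tuple g n) (w : Fin (k + 1) → Fin g) :
    wordEval X w = X (w 0) * wordEval X (Fin.tail w) := by
  rw [wordEval, List.ofFn_succ, List.prod_cons]
  rfl

theorem wordEval_dsum {g n m k : ℕ} (X : Tuple g n) (Y : Tuple g m) (w : Fin k → Fin g) :
    wordEval (dsum X Y) w =
      reindex finSumFinEquiv finSumFinEquiv (fromBlocks (wordEval X w) 0 0 (wordEval Y w)) := by
  induction k with
  | zero => simp [wordEval, fromBlocks_one]
  | succ k ih =>
    rw [wordEval_succ, wordEval_succ X, wordEval_succ Y, ih, dsum, reindex_apply, reindex_apply,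
      reindex_apply, submatrix_mul_equiv, fromBlocks_multiply]
    simp only [Matrix.mul_zero, Matrix.zero_mul, add_zero, zero_add]

theorem kroneckerMap_fromBlocks_zero {R l l' n n' m m' : Type*} [MulZeroClass R]
    (C : Matrix l l' R) (A : Matrix n n' R) (B : Matrix m m' R) :
    kroneckerMap (· * ·) C (fromBlocks A 0 0 B) =
      (fromBlocks (kroneckerMap (· * ·) C A) 0 0 (kroneckerMap (· * ·) C B)).submatrix
        (Equiv.prodSumDistrib l n m) (Equiv.prodSumDistrib l' n' m') := by
  ext ⟨i, a | a⟩ ⟨j, b | b⟩ <;> simp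

theorem sum_fromBlocks_zero {R ι n m : Type*} [AddCommMonoid R] (s : Finset ι)
    (A : ι → Matrix n n R) (B : ι → Matrix m m R) :
    ∑ i ∈ s, fromBlocks (A i) 0 0 (B i) = fromBlocks (∑ i ∈ s, A i) 0 0 (∑ i ∈ s, B i) := by
  ext (a | a) (b | b) <;> simp [Matrix.sum_apply]

theorem eval_dsum {g d δ n m : ℕ} (p : NCPoly g d δ) (X : Tuple g n) (Y : Tuple g m) :
    p.eval (dsum X Y) = (fromBlocks (p.eval X) 0 0 (p.eval Y)).submatrix
      (((Equiv.refl _).prodCongr finSumFinEquiv.symm).trans (Equiv.prodSumDistrib _ _ _))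
      (((Equiv.refl _).prodCongr finSumFinEquiv.symm).trans (Equiv.prodSumDistrib _ _ _)) := by
  simp only [NCPoly.eval, wordEval_dsum, reindex_apply, kroneckerMap_submatrix_right,
    kroneckerMap_fromBlocks_zero, submatrix_submatrix]
  simp_rw [← sum_fromBlocks_zero]
  ext
  simp only [Matrix.sum_apply, submatrix_apply]
  rfl

theorem isUnit_eval_dsum_iff {g d δ n m : ℕ} (p : NCPoly g d δ) (X : Tuple g n) (Y : Tuple g m) :
    IsUnit (p.eval (dsum X Y)) ↔ IsUnit (p.eval X) ∧ IsUnit (p.eval Y) := by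
  simp only [isUnit_iff_isUnit_det, eval_dsum, det_submatrix_equiv_self, det_fromBlocks_zero₂₁,
    IsUnit.mul_iff]

theorem isSymm_dsum_iff {g n m : ℕ} (X : Tuple g n) (Y : Tuple g m) (j : Fin g) :
    (dsum X Y j).IsSymm ↔ (X j).IsSymm ∧ (Y j).IsSymm := by
  rw [dsum, isSymm_reindex_iff, isSymm_fromBlocks_iff]
  simp

theorem dsum_mem_invSet_iff {g d δ n m : ℕ} (p : NCPoly g d δ) (X : Tuple g n) (Y : Tuple g m) :
    dsum X Y ∈ invSet p (n + m) ↔ X ∈ invSet p n ∧ Y ∈ invSet p m := by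
  simp only [invSet, Set.mem_ofPred_eq, isSymm_dsum_iff, forall_and, isUnit_eval_dsum_iff]
  tauto

theorem smul_dsum {g n m : ℕ} (t : ℝ) (X : Tuple g n) (Y : Tuple g m) :
    t • dsum X Y = dsum (t • X) (t • Y) := by
  ext1 j
  simp only [dsum, Pi.smul_apply, ← coe_reindexLinearEquiv ℝ ℝ, ← map_smul, fromBlocks_smul,
    smul_zero]

theorem mem_connectedComponentIn_zero_of_forall_smul_mem {E : Type*} [AddCommMonoid E]
    [Module ℝ E] [TopologicalSpace E] [ContinuousSMul ℝ E] {F : Set E} {x : E}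
    (h : ∀ t ∈ Set.Icc (0 : ℝ) 1, t • x ∈ F) : x ∈ connectedComponentIn F 0 := by
  have hray : IsPreconnected ((· • x) '' Set.Icc (0 : ℝ) 1) :=
    isPreconnected_Icc.image _ (continuous_id.smul continuous_const).continuousOn
  exact hray.subset_connectedComponentIn ⟨0, by simp, zero_smul ℝ x⟩
    (Set.image_subset_iff.mpr h) ⟨1, by simp, one_smul ℝ x⟩

theorem dsum_mem_Dset_of_convex_general
    {g d δ : ℕ} (p : NCPoly g d δ)
    (hconv : ∀ n, Convex ℝ (Dset p n))
    {n m : ℕ} (X : Tuple g n) (Y : Tuple g m)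
    (hXY : dsum X Y ∈ Dset p (n + m)) :
    X ∈ Dset p n ∧ Y ∈ Dset p m := by
  have hzero : (0 : Tuple g (n + m)) ∈ Dset p (n + m) :=
    mem_connectedComponentIn (connectedComponentIn_nonempty_iff.mp ⟨_, hXY⟩)
  have hray : ∀ t ∈ Set.Icc (0 : ℝ) 1, t • X ∈ invSet p n ∧ t • Y ∈ invSet p m := fun t ht => by
    rw [← dsum_mem_invSet_iff, ← smul_dsum]
    exact connectedComponentIn_subset _ _ ((hconv _).smul_mem_of_zero_mem hzero hXY ht)
  exact ⟨mem_connectedComponentIn_zero_of_forall_smul_mem fun t ht => (hray t ht).1,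
    mem_connectedComponentIn_zero_of_forall_smul_mem fun t ht => (hray t ht).2⟩

/-- If `p` is a symmetric nc matrix polynomial with `p(0)` invertible and every `𝒟_p(n)` is
convex, then direct summands of members of `𝒟_p` are again in `𝒟_p`: `X ⊕ Y ∈ 𝒟_p(n+m)`
implies `X ∈ 𝒟_p(n)` and `Y ∈ 𝒟_p(m)`. -/
theorem dsum_mem_Dset_of_convex
    {g d δ : ℕ} (p : NCPoly g d δ) (hsym : p.IsSymmPoly)
    (h0 : IsUnit p.constantCoeff)
    (hconv : ∀ n, Convex ℝ (Dset p n))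
    {n m : ℕ} (X : Tuple g n) (Y : Tuple g m)
    (hXY : dsum X Y ∈ Dset p (n + m)) :
    X ∈ Dset p n ∧ Y ∈ Dset p m :=
  dsum_mem_Dset_of_convex_general p hconv X Y hXY
end
end

section
/- For any real n×n matrix C with ‖C‖ ≤ 1 (operator norm), the Julia matrix U = [[C, (I − CCᵀ)^{1/2}], [−(I − CᵀC)^{1/2}, Cᵀ]] of size 2n×2n is orthogonal (i.e., UᵀU = I = UUᵀ). -/
/-!
Both `1 - CᵀC` and `1 - CCᵀ` are symmetric with finite spectrum, and on a finite set the square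
root agrees with a polynomial (Lagrange interpolation). Hence `C (1 - CᵀC) = (1 - CCᵀ) C` passes
to `C S = T C` for `S = (1 - CᵀC)^{1/2}`, `T = (1 - CCᵀ)^{1/2}`. With `S² = 1 - CᵀC`,
`T² = 1 - CCᵀ` and `Sᵀ = S`, `Tᵀ = T`, the block products `UᵀU` and `UUᵀ` reduce to the identity.
-/

open Matrix
open scoped Matrix.Norms.L2Operator

noncomputable section

/-- The square root of a positive semidefinite matrix, as defined in the older Mathlib
(`Matrix.PosSemidef.sqrt`, since removed). -/
def Matrix.PosSemidef.sqrt {n : Type*} [Fintype n] [DecidableEq n] {𝕜 : Type*} [RCLike 𝕜]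
    [PartialOrder 𝕜] {A : Matrix n n 𝕜} (hA : A.PosSemidef) : Matrix n n 𝕜 :=
  hA.1.eigenvectorUnitary.1 * diagonal ((↑) ∘ (√·) ∘ hA.1.eigenvalues) *
    (star hA.1.eigenvectorUnitary : Matrix n n 𝕜)

open Polynomial

theorem Polynomial.exists_eval_eq_on_finite {F : Type*} [Field F] {s : Set F} (hs : s.Finite)
    (f : F → F) : ∃ p : F[X], ∀ x ∈ s, p.eval x = f x := by
  classical
  exact ⟨Lagrange.interpolate hs.toFinset id f, fun _ hx =>
    Lagrange.eval_interpolate_at_node f (Set.injOn_id _) (hs.mem_toFinset.mpr hx)⟩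

theorem SemiconjBy.aeval {R A : Type*} [CommSemiring R] [Semiring A] [Algebra R A] {x a b : A}
    (h : SemiconjBy x a b) (p : R[X]) : SemiconjBy x (aeval a p) (aeval b p) := by
  induction p using Polynomial.induction_on' with
  | add p q hp hq => simpa only [map_add] using hp.add_right hq
  | monomial n r =>
    simp only [aeval_monomial]
    exact SemiconjBy.mul_right (Algebra.commutes r x).symm (h.pow_right n)

theorem SemiconjBy.cfc_of_finite_spectrum {A : Type*} [Ring A] [StarRing A] [Algebra ℝ A]
    [TopologicalSpace A] [ContinuousFunctionalCalculus ℝ A IsSelfAdjoint] {x a b : A}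
    (h : SemiconjBy x a b) (ha : IsSelfAdjoint a) (hb : IsSelfAdjoint b)
    (ha' : (spectrum ℝ a).Finite) (hb' : (spectrum ℝ b).Finite) (f : ℝ → ℝ) :
    SemiconjBy x (cfc f a) (cfc f b) := by
  obtain ⟨p, hp⟩ := exists_eval_eq_on_finite (ha'.union hb') f
  have hpa : cfc f a = Polynomial.aeval a p := by
    rw [← cfc_polynomial p a]
    exact cfc_congr fun t ht => (hp t (Or.inl ht)).symm
  have hpb : cfc f b = Polynomial.aeval b p := by
    rw [← cfc_polynomial p b]
    exact cfc_congr fun t ht => (hp t (Or.inr ht)).symm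
  rw [hpa, hpb]
  exact h.aeval p

namespace Matrix.PosSemidef

variable {n : Type*} [Fintype n] [DecidableEq n] {A : Matrix n n ℝ}

theorem sqrt_eq_cfc (hA : A.PosSemidef) : hA.sqrt = cfc Real.sqrt A := by
  rw [hA.1.cfc_eq, IsHermitian.cfc, Unitary.conjStarAlgAut_apply]
  rfl

theorem sqrt_mul_self (hA : A.PosSemidef) : hA.sqrt * hA.sqrt = A := by
  have hA' : IsSelfAdjoint A := hA.1
  rw [sqrt_eq_cfc, ← cfc_mul Real.sqrt Real.sqrt A]
  conv_rhs => rw [← cfc_id' ℝ A]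
  exact cfc_congr fun t ht => Real.mul_self_sqrt
    ((posSemidef_iff_isHermitian_and_spectrum_nonneg.mp hA).2 ht)

theorem transpose_sqrt (hA : A.PosSemidef) : hA.sqrtᵀ = hA.sqrt := by
  rw [sqrt_eq_cfc, ← conjTranspose_eq_transpose_of_trivial]
  exact (cfc_predicate Real.sqrt A : IsSelfAdjoint _)

theorem mul_sqrt_one_sub_transpose_mul_self (C : Matrix n n ℝ)
    (h1 : (1 - C * Cᵀ).PosSemidef) (h2 : (1 - Cᵀ * C).PosSemidef) :
    C * h2.sqrt = h1.sqrt * C := by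
  have hC : SemiconjBy C (1 - Cᵀ * C) (1 - C * Cᵀ) := by
    rw [SemiconjBy]
    noncomm_ring
  rw [sqrt_eq_cfc, sqrt_eq_cfc]
  exact hC.cfc_of_finite_spectrum h2.1 h1.1 (finite_spectrum _) (finite_spectrum _) _

end Matrix.PosSemidef

theorem Matrix.fromBlocks_julia_orthogonal {R : Type*} [CommRing R] {n : Type*} [Fintype n]
    [DecidableEq n] {C S T : Matrix n n R} (hS : Sᵀ = S) (hT : Tᵀ = T)
    (hS2 : S * S = 1 - Cᵀ * C) (hT2 : T * T = 1 - C * Cᵀ) (hCS : C * S = T * C) :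
    (fromBlocks C T (-S) Cᵀ)ᵀ * fromBlocks C T (-S) Cᵀ = 1 ∧
      fromBlocks C T (-S) Cᵀ * (fromBlocks C T (-S) Cᵀ)ᵀ = 1 := by
  have hSC : S * Cᵀ = Cᵀ * T := by
    simpa only [transpose_mul, hS, hT] using congrArg transpose hCS
  simp only [fromBlocks_transpose, transpose_neg, transpose_transpose, hS, hT,
    fromBlocks_multiply, ← fromBlocks_one, fromBlocks_inj, neg_mul, mul_neg, neg_neg, hS2, hT2,
    hCS, hSC]
  refine ⟨⟨?_, ?_, ?_, ?_⟩, ⟨?_, ?_, ?_, ?_⟩⟩ <;> abel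

theorem julia_matrix_orthogonal_general {n : ℕ} (C : Matrix (Fin n) (Fin n) ℝ)
    (h1 : (1 - C * Cᵀ).PosSemidef) (h2 : (1 - Cᵀ * C).PosSemidef) :
    (Matrix.fromBlocks C h1.sqrt (-(h2.sqrt)) Cᵀ)ᵀ *
        (Matrix.fromBlocks C h1.sqrt (-(h2.sqrt)) Cᵀ) = 1 ∧
      (Matrix.fromBlocks C h1.sqrt (-(h2.sqrt)) Cᵀ) *
        (Matrix.fromBlocks C h1.sqrt (-(h2.sqrt)) Cᵀ)ᵀ = 1 :=
  fromBlocks_julia_orthogonal h2.transpose_sqrt h1.transpose_sqrt h2.sqrt_mul_self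
    h1.sqrt_mul_self (PosSemidef.mul_sqrt_one_sub_transpose_mul_self C h1 h2)

/-- For a real contraction matrix `C` (i.e. `I − CᵀC ⪰ 0` and `I − CCᵀ ⪰ 0`, equivalently
`‖C‖ ≤ 1` in operator norm), the Julia matrix
`U = [[C, (I − CCᵀ)^{1/2}], [−(I − CᵀC)^{1/2}, Cᵀ]]` is orthogonal: `UᵀU = I = UUᵀ`. -/
theorem julia_matrix_orthogonal {n : ℕ} (C : Matrix (Fin n) (Fin n) ℝ)
    (hC : ‖C‖ ≤ 1)
    (h1 : (1 - C * Cᵀ).PosSemidef) (h2 : (1 - Cᵀ * C).PosSemidef) :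
    (Matrix.fromBlocks C h1.sqrt (-(h2.sqrt)) Cᵀ)ᵀ *
        (Matrix.fromBlocks C h1.sqrt (-(h2.sqrt)) Cᵀ) = 1 ∧
      (Matrix.fromBlocks C h1.sqrt (-(h2.sqrt)) Cᵀ) *
        (Matrix.fromBlocks C h1.sqrt (-(h2.sqrt)) Cᵀ)ᵀ = 1 :=
  julia_matrix_orthogonal_general C h1 h2
end
end

section
/- Let p be a symmetric δ×δ nc polynomial of degree d with p(0) invertible and each 𝒟_p(n) convex and bounded. Let (X, v) ∈ ∂̂𝒟_p (X ∈ ∂𝒟_p(n), p(X)v = 0, v ≠ 0) and let ℳ = {q(X)v : q ∈ 𝒫_d^δ} ⊆ ℝⁿ, where 𝒫_d^δ is the space of 1×δ rows of nc polynomials of degree at most d. Then (P_ℳ X|_ℳ, v) ∈ ∂̂𝒟_p: in particular t·P_ℳ X|_ℳ ∈ 𝒟_p for 0 ≤ t < 1 and p(P_ℳ X|_ℳ) v = 0. Moreover dim ℳ ≤ δ·Σ_{j=0}^d g^j. -/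
/-!
Let `ℳ` be spanned by the vectors `w(X)v_α` with `|w| ≤ d` and let `V` be an isometry onto `ℳ`.
Since `ℳ` also contains `w'(X)v_α` for every shorter word, `w(VᵀXV)Vᵀv_α = Vᵀw(X)v_α` for
`|w| ≤ d`, hence `p(VᵀXV)(1 ⊗ Vᵀ)v = (1 ⊗ Vᵀ)p(X)v = 0`; and `Vᵀv ≠ 0` because `VVᵀ` fixes
`v_α ∈ ℳ`.

For the membership, `tX ∈ 𝒟_p` for `0 ≤ t < 1` because `𝒟_p` is convex and contains a relative
neighbourhood of `0`. Moreover `𝒟_p` is closed under compressions: averaging `Y ∈ 𝒟_p` with its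
conjugate by the reflection `2VVᵀ - 1` gives `Z ∈ 𝒟_p` which leaves `range V` invariant and acts
there as `VᵀYV`. Then `p(sZ)` invertible forces `p(sVᵀYV)` invertible, so the whole segment
`{sVᵀYV : 0 ≤ s ≤ 1}` lies in the invertibility set and connects `VᵀYV` to `0`.
-/

open Matrix
open scoped Matrix.Norms.L2Operator

noncomputable section

/-- Evaluation of a row `q ∈ 𝒫_e^δ` (a `1 × δ` row of scalar nc polynomials of degree at most
`e`, given by coefficient row-vectors) at `X`, applied to `v = Σ e_α ⊗ v_α ∈ ℝ^δ ⊗ ℝⁿ`: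
`q(X)v = Σ_α q_α(X) v_α`. -/
def rowEval {g δ : ℕ} (e : ℕ) (q : ∀ k : ℕ, (Fin k → Fin g) → (Fin δ → ℝ))
    {n : ℕ} (X : Tuple g n) (v : Fin δ × Fin n → ℝ) : Fin n → ℝ :=
  ∑ k ∈ Finset.range (e + 1), ∑ w : Fin k → Fin g, ∑ α : Fin δ,
    q k w α • (wordEval X w).mulVec fun i => v (α, i)

/-- The subspace `ℳ = {q(X)v : q ∈ 𝒫_e^δ} ⊆ ℝⁿ`. -/
def rowSpace {g δ : ℕ} (e : ℕ) {n : ℕ} (X : Tuple g n) (v : Fin δ × Fin n → ℝ) :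
    Set (Fin n → ℝ) :=
  {u | ∃ q : ∀ k : ℕ, (Fin k → Fin g) → (Fin δ → ℝ), u = rowEval e q X v}

open scoped Kronecker

namespace Matrix

lemma IsSymm.transpose_mul_mul {n k : Type*} [Fintype n] {Y : Matrix n n ℝ} (hY : Y.IsSymm)
    (V : Matrix n k ℝ) : (Vᵀ * Y * V).IsSymm := by
  simp only [IsSymm, transpose_mul, transpose_transpose, hY.eq, Matrix.mul_assoc]

lemma curry_kronecker_mulVec {l l' m m' : Type*} [Fintype l'] [Fintype m']
    (C : Matrix l l' ℝ) (M : Matrix m m' ℝ) (u : l' × m' → ℝ) (α : l) :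
    Function.curry ((C ⊗ₖ M) *ᵥ u) α = ∑ β, C α β • (M *ᵥ Function.curry u β) := by
  ext i
  simp [mulVec, dotProduct, Fintype.sum_prod_type, Finset.mul_sum, mul_assoc]

end Matrix

lemma Submodule.exists_isometry_range_eq {n : ℕ} (M : Submodule ℝ (Fin n → ℝ)) :
    ∃ V : Matrix (Fin n) (Fin (Module.finrank ℝ M)) ℝ,
      Vᵀ * V = 1 ∧ ∀ u, u ∈ M ↔ ∃ c, u = V *ᵥ c := by
  let e : EuclideanSpace ℝ (Fin n) ≃ₗ[ℝ] (Fin n → ℝ) := WithLp.linearEquiv 2 ℝ (Fin n → ℝ)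
  let M' : Submodule ℝ (EuclideanSpace ℝ (Fin n)) := M.map e.symm.toLinearMap
  let b := (stdOrthonormalBasis ℝ M').reindex (finCongr (e.symm.finrank_map_eq M))
  let V : Matrix (Fin n) (Fin (Module.finrank ℝ M)) ℝ :=
    Matrix.of fun r a => (b a : EuclideanSpace ℝ (Fin n)) r
  have hV : ∀ c, V *ᵥ c = e (∑ a, c a • (b a : EuclideanSpace ℝ (Fin n))) := by
    intro c
    ext r
    simp [V, e, mulVec, dotProduct, mul_comm]
  refine ⟨V, ?_, fun u => ⟨fun hu => ?_, ?_⟩⟩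
  · ext a a'
    have h := orthonormal_iff_ite.1 b.orthonormal a a'
    rw [Submodule.coe_inner, PiLp.inner_apply] at h
    rw [Matrix.mul_apply, Matrix.one_apply, ← h]
    simp only [V, transpose_apply, of_apply, RCLike.inner_apply, conj_trivial]
    exact Finset.sum_congr rfl fun r _ => mul_comm _ _
  · let x : M' := ⟨e.symm u, Submodule.mem_map_of_mem hu⟩
    refine ⟨b.repr x, ?_⟩
    simpa [hV, x] using (congrArg (fun y : M' => e y) (b.sum_repr x)).symm
  · rintro ⟨c, rfl⟩
    rw [hV]
    exact (M.mem_map_equiv).1 (M'.sum_mem fun a _ => M'.smul_mem _ (b a).2)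

def symmTuples (g n : ℕ) : Submodule ℝ (Tuple g n) where
  carrier := {X | ∀ j, (X j).IsSymm}
  add_mem' hX hY j := (hX j).add (hY j)
  zero_mem' _ := isSymm_zero
  smul_mem' c _ hX j := (hX j).smul c

namespace NCPoly

variable {g d δ n k : ℕ}

lemma wordEval_zero_length (X : Tuple g n) (w : Fin 0 → Fin g) : wordEval X w = 1 := by
  simp [wordEval]

lemma wordEval_succ (X : Tuple g n) (w : Fin (k + 1) → Fin g) :
    wordEval X w = X (w 0) * wordEval X (Fin.tail w) := by
  simp [wordEval, List.ofFn_succ, Fin.tail]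

lemma wordEval_zero_tuple (w : Fin (k + 1) → Fin g) : wordEval (0 : Tuple g n) w = 0 := by
  rw [wordEval_succ, Pi.zero_apply, Matrix.zero_mul]

lemma continuous_wordEval (w : Fin k → Fin g) :
    Continuous fun X : Tuple g n => wordEval X w := by
  induction k with
  | zero => simpa [wordEval_zero_length] using continuous_const
  | succ k ih =>
    simp only [wordEval_succ]
    exact (continuous_apply (w 0)).matrix_mul (ih _)

lemma wordEval_mul_of_intertwine {Z : Tuple g n} {A : Tuple g k} {V : Matrix (Fin n) (Fin k) ℝ}
    (hZA : ∀ j, Z j * V = V * A j) {m : ℕ} (w : Fin m → Fin g) :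
    wordEval Z w * V = V * wordEval A w := by
  induction m with
  | zero => simp [wordEval_zero_length]
  | succ m ih =>
    rw [wordEval_succ, wordEval_succ, Matrix.mul_assoc, ih, ← Matrix.mul_assoc, hZA,
      Matrix.mul_assoc]

lemma wordEval_compress_mulVec {X : Tuple g n} {V : Matrix (Fin n) (Fin k) ℝ} {x : Fin n → ℝ}
    {m : ℕ} (w : Fin m → Fin g)
    (hfix : ∀ l < m, ∀ w' : Fin l → Fin g,
      V *ᵥ (Vᵀ *ᵥ (wordEval X w' *ᵥ x)) = wordEval X w' *ᵥ x) :
    wordEval (fun j => Vᵀ * X j * V) w *ᵥ (Vᵀ *ᵥ x) = Vᵀ *ᵥ (wordEval X w *ᵥ x) := by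
  induction m with
  | zero => simp [wordEval_zero_length]
  | succ m ih =>
    rw [wordEval_succ, wordEval_succ, ← mulVec_mulVec,
      ih _ fun l hl => hfix l (hl.trans m.lt_succ_self), ← mulVec_mulVec, ← mulVec_mulVec,
      hfix m m.lt_succ_self, mulVec_mulVec, mulVec_mulVec, mulVec_mulVec, Matrix.mul_assoc]

variable (p : NCPoly g d δ)

lemma eval_eq_sum_kronecker (X : Tuple g n) :
    p.eval X = ∑ k ∈ Finset.range (d + 1), ∑ w : Fin k → Fin g, p.coeff k w ⊗ₖ wordEval X w :=
  rfl

lemma continuous_eval : Continuous fun X : Tuple g n => p.eval X :=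
  continuous_finsetSum _ fun _ _ => continuous_finsetSum _ fun w _ =>
    continuous_matrix fun i j => continuous_const.mul ((continuous_wordEval w).matrix_elem i.2 j.2)

lemma eval_zero : p.eval (0 : Tuple g n) = p.constantCoeff ⊗ₖ 1 := by
  rw [NCPoly.eval, Finset.sum_eq_single_of_mem 0 (Finset.mem_range.2 d.succ_pos)]
  · rw [Fintype.sum_subsingleton _ finZeroElim, wordEval_zero_length]
    rfl
  · rintro (_ | k) - hk
    · exact absurd rfl hk
    · simp [wordEval_zero_tuple]

lemma eval_mul_of_intertwine {Z : Tuple g n} {A : Tuple g k} {V : Matrix (Fin n) (Fin k) ℝ}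
    (hZA : ∀ j, Z j * V = V * A j) :
    p.eval Z * ((1 : Matrix (Fin δ) (Fin δ) ℝ) ⊗ₖ V) =
      ((1 : Matrix (Fin δ) (Fin δ) ℝ) ⊗ₖ V) * p.eval A := by
  simp only [eval_eq_sum_kronecker, Matrix.sum_mul, Matrix.mul_sum, ← mul_kronecker_mul,
    Matrix.mul_one, Matrix.one_mul, wordEval_mul_of_intertwine hZA]

lemma isUnit_eval_of_intertwine {Z : Tuple g n} {A : Tuple g k} {V : Matrix (Fin n) (Fin k) ℝ}
    {W : Matrix (Fin k) (Fin n) ℝ} (hWV : W * V = 1) (hZA : ∀ j, Z j * V = V * A j)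
    (hZ : IsUnit (p.eval Z)) : IsUnit (p.eval A) := by
  rw [← mulVec_injective_iff_isUnit] at hZ ⊢
  set I : Matrix (Fin δ) (Fin δ) ℝ := 1
  have hleft : (I ⊗ₖ W) * (I ⊗ₖ V) = 1 := by
    rw [← mul_kronecker_mul, Matrix.one_mul, hWV, one_kronecker_one]
  intro x y hxy
  have h : (I ⊗ₖ V) *ᵥ x = (I ⊗ₖ V) *ᵥ y := hZ <| by
    rw [mulVec_mulVec, mulVec_mulVec, eval_mul_of_intertwine p hZA, ← mulVec_mulVec, hxy,
      mulVec_mulVec]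
  simpa [mulVec_mulVec, hleft] using congrArg ((I ⊗ₖ W) *ᵥ ·) h

lemma curry_eval_mulVec (X : Tuple g n) (u : Fin δ × Fin n → ℝ) (α : Fin δ) :
    Function.curry (p.eval X *ᵥ u) α = ∑ k ∈ Finset.range (d + 1), ∑ w : Fin k → Fin g,
      ∑ β, p.coeff k w α β • (wordEval X w *ᵥ Function.curry u β) := by
  ext i
  simp [eval_eq_sum_kronecker, sum_mulVec, Finset.sum_apply, ← curry_kronecker_mulVec]

-- `fun q => ∑ r, V r q.2 * u (q.1, r)` is `(1 ⊗ Vᵀ) u`, whose `β`-th block is `Vᵀ u_β`.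
lemma curry_eval_compress_mulVec {X : Tuple g n} {V : Matrix (Fin n) (Fin k) ℝ}
    {u : Fin δ × Fin n → ℝ}
    (hfix : ∀ l < d, ∀ (w : Fin l → Fin g) β,
      V *ᵥ (Vᵀ *ᵥ (wordEval X w *ᵥ Function.curry u β)) = wordEval X w *ᵥ Function.curry u β)
    (α : Fin δ) :
    Function.curry (p.eval (fun j => Vᵀ * X j * V) *ᵥ fun q => ∑ r, V r q.2 * u (q.1, r)) α =
      Vᵀ *ᵥ Function.curry (p.eval X *ᵥ u) α := by
  rw [curry_eval_mulVec, curry_eval_mulVec, mulVec_sum]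
  refine Finset.sum_congr rfl fun m hm => ?_
  rw [mulVec_sum]
  refine Finset.sum_congr rfl fun w _ => ?_
  rw [mulVec_sum]
  refine Finset.sum_congr rfl fun β _ => ?_
  rw [mulVec_smul, ← wordEval_compress_mulVec w fun l hl w' =>
    hfix l (hl.trans_le (Nat.lt_succ_iff.1 (Finset.mem_range.1 hm))) w' β]
  rfl

lemma invSet_subset_symmTuples : invSet p n ⊆ symmTuples g n := fun _ hX => hX.1

lemma Dset_subset_invSet : Dset p n ⊆ invSet p n := connectedComponentIn_subset _ _

lemma zero_mem_Dset (h0 : IsUnit p.constantCoeff) : (0 : Tuple g n) ∈ Dset p n := by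
  refine mem_connectedComponentIn ⟨(symmTuples g n).zero_mem, ?_⟩
  rw [eval_zero]
  exact h0.kronecker isUnit_one

lemma isOpen_setOf_isUnit_eval : IsOpen {X : Tuple g n | IsUnit (p.eval X)} :=
  Units.isOpen.preimage (continuous_eval p)

lemma exists_ball_inter_symmTuples_subset_Dset {Y : Tuple g n} (hY : Y ∈ Dset p n) :
    ∃ ε > 0, Metric.ball Y ε ∩ symmTuples g n ⊆ Dset p n := by
  obtain ⟨ε, hε, hball⟩ :=
    Metric.isOpen_iff.1 (isOpen_setOf_isUnit_eval p) Y (Dset_subset_invSet p hY).2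
  refine ⟨ε, hε, ?_⟩
  rw [Dset, connectedComponentIn_eq hY]
  refine ((convex_ball Y ε).inter (symmTuples g n).convex).isPreconnected
    |>.subset_connectedComponentIn ⟨Metric.mem_ball_self hε, (Dset_subset_invSet p hY).1⟩ ?_
  exact fun Z hZ => ⟨hZ.2, hball hZ.1⟩

lemma closure_Dset_subset_symmTuples : closure (Dset p n) ⊆ symmTuples g n :=
  closure_minimal ((Dset_subset_invSet p).trans (invSet_subset_symmTuples p))
    (symmTuples g n).closed_of_finiteDimensional

lemma smul_mem_Dset_of_mem_closure (h0 : IsUnit p.constantCoeff) (hconv : Convex ℝ (Dset p n))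
    {X : Tuple g n} (hX : X ∈ closure (Dset p n)) {t : ℝ} (ht0 : 0 ≤ t) (ht1 : t < 1) :
    t • X ∈ Dset p n := by
  obtain ⟨ρ, hρ, hball⟩ := exists_ball_inter_symmTuples_subset_Dset p (zero_mem_Dset p h0)
  have h1t : 0 < 1 - t := by linarith
  obtain ⟨Y, hY, hXY⟩ := Metric.mem_closure_iff.1 hX (ρ * (1 - t)) (by positivity)
  set W : Tuple g n := (t / (1 - t)) • (X - Y)
  have hW : W ∈ Dset p n := by
    refine hball ⟨?_, ?_⟩
    · rw [mem_ball_zero_iff, norm_smul, Real.norm_of_nonneg (by positivity), ← dist_eq_norm,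
        div_mul_eq_mul_div, div_lt_iff₀ h1t]
      nlinarith [dist_nonneg (x := X) (y := Y)]
    · exact (symmTuples g n).smul_mem _ <| (symmTuples g n).sub_mem
        (closure_Dset_subset_symmTuples p hX) (invSet_subset_symmTuples p (Dset_subset_invSet p hY))
  have hcomb : t • Y + (1 - t) • W = t • X := by
    simp only [W, smul_smul, mul_div_cancel₀ _ h1t.ne', smul_sub]
    abel
  exact hcomb ▸ hconv hY hW ht0 h1t.le (by ring)

lemma conj_mem_Dset (h0 : IsUnit p.constantCoeff) {U : Matrix (Fin n) (Fin n) ℝ}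
    (hU : Uᵀ * U = 1) (hU' : U * Uᵀ = 1) {Y : Tuple g n} (hY : Y ∈ Dset p n) :
    (fun j => Uᵀ * Y j * U) ∈ Dset p n := by
  set f : Tuple g n → Tuple g n := fun Z j => Uᵀ * Z j * U
  have hf : Continuous f := by fun_prop
  have hf0 : f 0 = 0 := by ext1 j; simp [f]
  have hinv : f '' Dset p n ⊆ invSet p n := by
    rintro _ ⟨Z, hZ, rfl⟩
    obtain ⟨hZsymm, hZunit⟩ := Dset_subset_invSet p hZ
    refine ⟨fun j => (hZsymm j).transpose_mul_mul U, ?_⟩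
    refine isUnit_eval_of_intertwine p hU (fun j => ?_) hZunit
    rw [← Matrix.mul_assoc, ← Matrix.mul_assoc, hU', Matrix.one_mul]
  exact (isPreconnected_connectedComponentIn.image f hf.continuousOn).subset_connectedComponentIn
    ⟨0, zero_mem_Dset p h0, hf0⟩ hinv ⟨Y, hY, rfl⟩

lemma mem_Dset_of_intertwine (h0 : IsUnit p.constantCoeff) (hconv : Convex ℝ (Dset p n))
    {Z : Tuple g n} (hZ : Z ∈ Dset p n) {A : Tuple g k} (hA : A ∈ symmTuples g k)
    {V : Matrix (Fin n) (Fin k) ℝ} {W : Matrix (Fin k) (Fin n) ℝ} (hWV : W * V = 1)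
    (hZA : ∀ j, Z j * V = V * A j) : A ∈ Dset p k := by
  have hsegment : (fun s : ℝ => s • A) '' Set.Icc 0 1 ⊆ invSet p k := by
    rintro _ ⟨s, hs, rfl⟩
    refine ⟨(symmTuples g k).smul_mem s hA, ?_⟩
    refine isUnit_eval_of_intertwine p hWV (Z := s • Z) (fun j => ?_)
      (Dset_subset_invSet p (hconv.smul_mem_of_zero_mem (zero_mem_Dset p h0) hZ hs)).2
    simp only [Pi.smul_apply, Matrix.smul_mul, Matrix.mul_smul, hZA]
  exact (isPreconnected_Icc.image _ (continuous_id.smul continuous_const).continuousOn)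
    |>.subset_connectedComponentIn ⟨0, Set.left_mem_Icc.2 zero_le_one, zero_smul ℝ A⟩ hsegment
    ⟨1, Set.right_mem_Icc.2 zero_le_one, one_smul ℝ A⟩

lemma compress_mem_Dset (h0 : IsUnit p.constantCoeff) (hconv : Convex ℝ (Dset p n))
    {V : Matrix (Fin n) (Fin k) ℝ} (hV : Vᵀ * V = 1) {Y : Tuple g n} (hY : Y ∈ Dset p n) :
    (fun j => Vᵀ * Y j * V) ∈ Dset p k := by
  set R : Matrix (Fin n) (Fin n) ℝ := (2 : ℝ) • (V * Vᵀ) - 1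
  have hRt : Rᵀ = R := by simp [R, transpose_sub, transpose_smul, transpose_mul]
  have hRV : R * V = V := by
    simp only [R, Matrix.sub_mul, Matrix.smul_mul, Matrix.mul_assoc, hV, Matrix.mul_one,
      Matrix.one_mul]
    module
  have hRR : R * R = 1 := by
    have hP : V * Vᵀ * (V * Vᵀ) = V * Vᵀ := by
      rw [Matrix.mul_assoc, ← Matrix.mul_assoc Vᵀ, hV, Matrix.one_mul]
    simp only [R, Matrix.sub_mul, Matrix.mul_sub, Matrix.smul_mul, Matrix.mul_smul, hP,
      Matrix.one_mul, Matrix.mul_one]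
    module
  have hZ : (1 / 2 : ℝ) • Y + (1 / 2 : ℝ) • (fun j => Rᵀ * Y j * R) ∈ Dset p n :=
    hconv hY (conj_mem_Dset p h0 (by rw [hRt, hRR]) (by rw [hRt, hRR]) hY)
      (by norm_num) (by norm_num) (by norm_num)
  refine mem_Dset_of_intertwine p h0 hconv hZ
    (fun j => ((Dset_subset_invSet p hY).1 j).transpose_mul_mul V) hV (fun j => ?_)
  simp only [Pi.add_apply, Pi.smul_apply, hRt, Matrix.add_mul, Matrix.smul_mul, Matrix.mul_assoc,
    hRV]
  simp only [R, Matrix.sub_mul, Matrix.smul_mul, Matrix.one_mul, Matrix.mul_assoc]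
  module

end NCPoly

section RowSpace

variable {g δ n : ℕ}

def wordVectors (d : ℕ) (X : Tuple g n) (v : Fin δ × Fin n → ℝ) :
    (Σ k : Fin (d + 1), (Fin k → Fin g) × Fin δ) → Fin n → ℝ :=
  fun i => wordEval X i.2.1 *ᵥ Function.curry v i.2.2

lemma card_wordIndex (d : ℕ) :
    Fintype.card (Σ k : Fin (d + 1), (Fin k → Fin g) × Fin δ) =
      δ * ∑ j ∈ Finset.range (d + 1), g ^ j := by
  rw [Fintype.card_sigma, Finset.mul_sum, ← Fin.sum_univ_eq_sum_range]
  simp [mul_comm]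

lemma rowSpace_eq_span (d : ℕ) (X : Tuple g n) (v : Fin δ × Fin n → ℝ) :
    rowSpace d X v = Submodule.span ℝ (Set.range (wordVectors d X v)) := by
  ext u
  constructor
  · rintro ⟨q, rfl⟩
    refine Submodule.sum_mem _ fun k hk => Submodule.sum_mem _ fun w _ =>
      Submodule.sum_mem _ fun α _ => Submodule.smul_mem _ _ (Submodule.subset_span ?_)
    exact ⟨⟨⟨k, Finset.mem_range.1 hk⟩, w, α⟩, rfl⟩
  · intro hu
    obtain ⟨c, rfl⟩ := (Submodule.mem_span_range_iff_exists_fun ℝ).1 hu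
    refine ⟨fun k w α => if hk : k < d + 1 then c ⟨⟨k, hk⟩, w, α⟩ else 0, ?_⟩
    rw [rowEval, ← Fin.sum_univ_eq_sum_range, Fintype.sum_sigma]
    refine Finset.sum_congr rfl fun k _ => ?_
    simp only [Fintype.sum_prod_type, dif_pos k.isLt]
    rfl

lemma compress_vector_ne_zero {k : ℕ} {V : Matrix (Fin n) (Fin k) ℝ} {v : Fin δ × Fin n → ℝ}
    (hv : v ≠ 0) (hfix : ∀ β, V *ᵥ (Vᵀ *ᵥ Function.curry v β) = Function.curry v β) :
    (fun q : Fin δ × Fin k => ∑ r, V r q.2 * v (q.1, r)) ≠ 0 := by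
  intro hzero
  refine hv (funext fun ⟨α, i⟩ => ?_)
  have hα : Vᵀ *ᵥ Function.curry v α = 0 := congrArg (Function.curry · α) hzero
  have h := hfix α
  rw [hα, mulVec_zero] at h
  exact congrFun h.symm i

end RowSpace

theorem compression_to_M_in_detailed_boundary_general
    {g d δ : ℕ} (p : NCPoly g d δ)
    (h0 : IsUnit p.constantCoeff)
    (hconv : ∀ n, Convex ℝ (Dset p n))
    {n : ℕ} (X : Tuple g n) (v : Fin δ × Fin n → ℝ) (hv : v ≠ 0)
    (hXbd : X ∈ closure (Dset p n) \ Dset p n)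
    (hker : (p.eval X).mulVec v = 0) :
    ∃ (k : ℕ) (V : Matrix (Fin n) (Fin k) ℝ),
      k ≤ δ * ∑ j ∈ Finset.range (d + 1), g ^ j ∧
      Vᵀ * V = 1 ∧
      (∀ u : Fin n → ℝ, u ∈ rowSpace d X v ↔ ∃ c : Fin k → ℝ, u = V.mulVec c) ∧
      (∀ t : ℝ, 0 ≤ t → t < 1 →
        t • (fun j => Vᵀ * X j * V : Tuple g k) ∈ Dset p k) ∧
      (p.eval (fun j => Vᵀ * X j * V : Tuple g k)).mulVec
          (fun q => ∑ r, V r q.2 * v (q.1, r)) = 0 ∧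
      (fun q : Fin δ × Fin k => ∑ r, V r q.2 * v (q.1, r)) ≠ 0 := by
  obtain ⟨V, hV, hMV⟩ :=
    Submodule.exists_isometry_range_eq (Submodule.span ℝ (Set.range (wordVectors d X v)))
  have hfix : ∀ l ≤ d, ∀ (w : Fin l → Fin g) β,
      V *ᵥ (Vᵀ *ᵥ (wordEval X w *ᵥ Function.curry v β)) = wordEval X w *ᵥ Function.curry v β := by
    intro l hl w β
    obtain ⟨c, hc⟩ : ∃ c, wordEval X w *ᵥ Function.curry v β = V *ᵥ c :=
      (hMV _).1 (Submodule.subset_span ⟨⟨⟨l, Nat.lt_succ_of_le hl⟩, w, β⟩, rfl⟩)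
    rw [hc, mulVec_mulVec, mulVec_mulVec, Matrix.mul_assoc, hV, Matrix.mul_one]
  refine ⟨_, V, (finrank_range_le_card _).trans (card_wordIndex d).le, hV,
    fun u => by rw [rowSpace_eq_span]; exact hMV u, fun t ht0 ht1 => ?_, ?_,
    compress_vector_ne_zero hv fun β => by
      simpa [NCPoly.wordEval_zero_length] using hfix 0 d.zero_le finZeroElim β⟩
  · convert NCPoly.compress_mem_Dset p h0 (hconv n) hV
      (NCPoly.smul_mem_Dset_of_mem_closure p h0 (hconv n) hXbd.1 ht0 ht1) using 1
    ext1 j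
    simp only [Pi.smul_apply, Matrix.mul_smul, Matrix.smul_mul]
  · ext ⟨α, i⟩
    have hblock := NCPoly.curry_eval_compress_mulVec p (fun l hl w β => hfix l hl.le w β) α
    rw [hker] at hblock
    exact (congrFun hblock i).trans (congrFun (mulVec_zero Vᵀ) i)

/-- Compression to `ℳ = {q(X)v : q ∈ 𝒫_d^δ}`: if `(X, v) ∈ ∂̂𝒟_p`, then the compressed tuple
`P_ℳ X|_ℳ` (realized as `VᵀXV` for an isometry `V : ℝ^k → ℝⁿ` onto `ℳ`, `k = dim ℳ ≤
δ·Σ_{j=0}^d g^j`) together with (the compressed) `v` again lies in `∂̂𝒟_p`: `t·P_ℳX|_ℳ ∈ 𝒟_p`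
for `0 ≤ t < 1` and `p(P_ℳX|_ℳ)v = 0`. -/
theorem compression_to_M_in_detailed_boundary
    {g d δ : ℕ} (p : NCPoly g d δ) (hsym : p.IsSymmPoly)
    (h0 : IsUnit p.constantCoeff)
    (hconv : ∀ n, Convex ℝ (Dset p n))
    (hbdd : ∃ K : ℝ, ∀ n, ∀ X ∈ Dset p n, (∑ j, ‖X j‖) ≤ K)
    {n : ℕ} (X : Tuple g n) (v : Fin δ × Fin n → ℝ) (hv : v ≠ 0)
    (hXbd : X ∈ closure (Dset p n) \ Dset p n)
    (hker : (p.eval X).mulVec v = 0) :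
    ∃ (k : ℕ) (V : Matrix (Fin n) (Fin k) ℝ),
      k ≤ δ * ∑ j ∈ Finset.range (d + 1), g ^ j ∧
      Vᵀ * V = 1 ∧
      (∀ u : Fin n → ℝ, u ∈ rowSpace d X v ↔ ∃ c : Fin k → ℝ, u = V.mulVec c) ∧
      (∀ t : ℝ, 0 ≤ t → t < 1 →
        t • (fun j => Vᵀ * X j * V : Tuple g k) ∈ Dset p k) ∧
      (p.eval (fun j => Vᵀ * X j * V : Tuple g k)).mulVec
          (fun q => ∑ r, V r q.2 * v (q.1, r)) = 0 ∧
      (fun q : Fin δ × Fin k => ∑ r, V r q.2 * v (q.1, r)) ≠ 0 :=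
  compression_to_M_in_detailed_boundary_general p h0 hconv X v hv hXbd hker
end
end

section
/- Let Λ : 𝕊ₙ(ℝ)^g → ℝ be a linear functional and for each ℓ = 1,…,g let B_ℓ be the unique symmetric n×n matrix with ⟨B_ℓ c, d⟩ = ½ Λ((cdᵀ + dcᵀ)·e_ℓ) for c, d ∈ ℝⁿ, where (cdᵀ + dcᵀ)·e_ℓ denotes the g-tuple with cdᵀ+dcᵀ in slot ℓ and 0 elsewhere. Then for any m, any Y ∈ 𝕊ₘ(ℝ)^g, and any vector γ = Σ_j γ_j ⊗ e_j ∈ ℝⁿ ⊗ ℝᵐ, one has ⟨(Σ_ℓ B_ℓ ⊗ Y_ℓ) γ, γ⟩ = Λ(Γ Y Γᵀ), where Γ is the n×m matrix whose j-th column is γ_j and ΓYΓᵀ = (ΓY₁Γᵀ, …, ΓY_gΓᵀ). -/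
/-!
Polarization identifies `M ↦ Λ (Pi.single ℓ M)` on symmetric matrices with `M ↦ tr (B_ℓ M)`,
because both sides agree on `M + Mᵀ` for the matrix units `M`. On the other side, reading `γ`
as the vectorization of `Γᵀ` turns the Kronecker quadratic form into `tr (B_ℓ Γ Y_ℓᵀ Γᵀ)`;
summing over `ℓ` and using linearity of `Λ` gives the identity.
-/

open Matrix
open scoped Kronecker

theorem Matrix.kronecker_mulVec_vec_dotProduct_vec {n m R : Type*} [Fintype n] [Fintype m]
    [CommSemiring R] (B : Matrix n n R) (Y : Matrix m m R) (Γ : Matrix n m R) :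
    (B ⊗ₖ Y) *ᵥ vec Γᵀ ⬝ᵥ vec Γᵀ = (B * Γ * Yᵀ * Γᵀ).trace := by
  rw [kronecker_mulVec_vec, vec_dotProduct_vec]
  simp only [transpose_mul, transpose_transpose, Matrix.mul_assoc]

theorem Matrix.IsSymm.mul_mul_transpose {n m R : Type*} [Fintype m] [CommSemiring R]
    {Y : Matrix m m R} (hY : Y.IsSymm) (Γ : Matrix n m R) : (Γ * Y * Γᵀ).IsSymm := by
  rw [IsSymm, transpose_mul, transpose_mul, transpose_transpose, hY.eq, Matrix.mul_assoc]

section Polarization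

variable {n K : Type*} [Fintype n] [DecidableEq n] [Field K] [NeZero (2 : K)]
  {φ : Matrix n n K →ₗ[K] K} {B : Matrix n n K}

theorem map_add_transpose_eq_two_mul_trace_mul
    (hB : ∀ c d, B *ᵥ c ⬝ᵥ d = (1 / 2 : K) * φ (vecMulVec c d + vecMulVec d c))
    (M : Matrix n n K) : φ (M + Mᵀ) = 2 * (B * M).trace := by
  induction M using Matrix.induction_on' with
  | h_zero => simp
  | h_add M N hM hN =>
    rw [transpose_add, add_add_add_comm, map_add, hM, hN, Matrix.mul_add, trace_add, mul_add]
  | h_std_basis i j x =>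
    have hij : 2 * B j i = φ (vecMulVec (Pi.single i 1) (Pi.single j 1)
        + vecMulVec (Pi.single j 1) (Pi.single i 1)) := by
      have h := hB (Pi.single i 1) (Pi.single j 1)
      rw [mulVec_single_one, dotProduct_single_one, col_apply] at h
      rw [h, ← mul_assoc, mul_one_div_cancel two_ne_zero, one_mul]
    have hsingle : ∀ (k l : n), single k l x = x • vecMulVec (Pi.single k 1) (Pi.single l 1) := by
      intro k l
      rw [← single_eq_single_vecMulVec_single, smul_single, smul_eq_mul, mul_one]
    rw [trace_mul_single, transpose_single, hsingle i j, hsingle j i, ← smul_add, map_smul]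
    simp only [smul_eq_mul, MulOpposite.smul_eq_mul_unop, MulOpposite.unop_op] at hij ⊢
    linear_combination (-x) * hij

theorem map_eq_trace_mul_of_isSymm
    (hB : ∀ c d, B *ᵥ c ⬝ᵥ d = (1 / 2 : K) * φ (vecMulVec c d + vecMulVec d c))
    {M : Matrix n n K} (hM : M.IsSymm) : φ M = (B * M).trace := by
  have h := map_add_transpose_eq_two_mul_trace_mul hB M
  rw [hM.eq, ← two_smul K M, map_smul, smul_eq_mul] at h
  exact mul_left_cancel₀ two_ne_zero h

end Polarization

theorem effros_winkler_pencil_identity_general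
    {g n : ℕ} (Λ : (Fin g → Matrix (Fin n) (Fin n) ℝ) →ₗ[ℝ] ℝ)
    (B : Fin g → Matrix (Fin n) (Fin n) ℝ)
    (hB : ∀ (ℓ : Fin g) (c d : Fin n → ℝ),
      (B ℓ).mulVec c ⬝ᵥ d
        = (1 / 2 : ℝ) * Λ (Pi.single ℓ (Matrix.vecMulVec c d + Matrix.vecMulVec d c))) :
    ∀ (m : ℕ) (Y : Fin g → Matrix (Fin m) (Fin m) ℝ), (∀ ℓ, (Y ℓ).IsSymm) →
      ∀ γ : Fin n × Fin m → ℝ,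
        (∑ ℓ, Matrix.kroneckerMap (· * ·) (B ℓ) (Y ℓ)).mulVec γ ⬝ᵥ γ
          = Λ (fun ℓ => (Matrix.of fun i j => γ (i, j)) * Y ℓ * (Matrix.of fun i j => γ (i, j))ᵀ) := by
  intro m Y hY γ
  set Γ : Matrix (Fin n) (Fin m) ℝ := of fun i j => γ (i, j)
  have hγ : γ = vec Γᵀ := rfl
  calc (∑ ℓ, B ℓ ⊗ₖ Y ℓ) *ᵥ γ ⬝ᵥ γ
      = ∑ ℓ, (B ℓ * (Γ * Y ℓ * Γᵀ)).trace := by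
        simp only [sum_mulVec, sum_dotProduct, hγ, kronecker_mulVec_vec_dotProduct_vec,
          (hY _).eq, Matrix.mul_assoc]
    _ = ∑ ℓ, Λ (Pi.single ℓ (Γ * Y ℓ * Γᵀ)) := by
        refine Finset.sum_congr rfl fun ℓ _ => ?_
        exact (map_eq_trace_mul_of_isSymm (φ := Λ ∘ₗ LinearMap.single ℝ (fun _ ↦ _) ℓ) (hB ℓ)
          ((hY ℓ).mul_mul_transpose Γ)).symm
    _ = Λ (fun ℓ => Γ * Y ℓ * Γᵀ) := by rw [← map_sum, Finset.univ_sum_single]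

/-- The central Effros–Winkler identity: if `B_ℓ` is the symmetric matrix representing the
bilinear form `(c,d) ↦ ½ Λ((cdᵀ + dcᵀ)·e_ℓ)`, then for any tuple `Y` of symmetric `m × m`
matrices and any `γ = Σ_j γ_j ⊗ e_j ∈ ℝⁿ ⊗ ℝᵐ`,
`⟨(Σ_ℓ B_ℓ ⊗ Y_ℓ)γ, γ⟩ = Λ(ΓYΓᵀ)` where `Γ` has `j`-th column `γ_j`. -/
theorem effros_winkler_pencil_identity
    {g n : ℕ} (Λ : (Fin g → Matrix (Fin n) (Fin n) ℝ) →ₗ[ℝ] ℝ)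
    (B : Fin g → Matrix (Fin n) (Fin n) ℝ) (hBsym : ∀ ℓ, (B ℓ).IsSymm)
    (hB : ∀ (ℓ : Fin g) (c d : Fin n → ℝ),
      (B ℓ).mulVec c ⬝ᵥ d
        = (1 / 2 : ℝ) * Λ (Pi.single ℓ (Matrix.vecMulVec c d + Matrix.vecMulVec d c))) :
    ∀ (m : ℕ) (Y : Fin g → Matrix (Fin m) (Fin m) ℝ), (∀ ℓ, (Y ℓ).IsSymm) →
      ∀ γ : Fin n × Fin m → ℝ,
        (∑ ℓ, Matrix.kroneckerMap (· * ·) (B ℓ) (Y ℓ)).mulVec γ ⬝ᵥ γ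
          = Λ (fun ℓ => (Matrix.of fun i j => γ (i, j)) * Y ℓ * (Matrix.of fun i j => γ (i, j))ᵀ) :=
  effros_winkler_pencil_identity_general Λ B hB
end
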